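/- arXiv:1707.01649 — 10 statements merged into one kernel-verified Lean document; each statement's English description precedes it below -/
import Mathlib

section
/- Let K be a field of characteristic p > 0 with [K:K^p] finite, and let L be an algebraic extension of K. Then [L:L^p] ≤ [K:K^p]. -/
/-!
For a finite extension `M/E` of fields of characteristic `p`, the towers `E^p ⊆ E ⊆ M` and
`E^p ⊆ M^p ⊆ M` compute the same degree, and Frobenius identifies `M^p/E^p` with `M/E`;
cancelling the finite nonzero degree `[M:E]` gives `[M:M^p] = [E:E^p]`. For algebraic `L/K`, a
finite family in `L` linearly independent over `L^p` lies in the finite subextension `M` it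
generates and stays independent over `M^p ⊆ L^p`, so it has at most `[M:M^p] = [K:K^p]` members.
-/

universe u

/-- The subfield of `p`-th powers of a field of characteristic `p`. -/
def pthPowerSubfield (K : Type u) [Field K] (p : ℕ) [Fact p.Prime] [CharP K p] : Subfield K :=
  (frobenius K p).fieldRange

open Cardinal

theorem Cardinal.eq_of_mul_eq_mul_right_of_lt_aleph0 {a b d : Cardinal} (hd₀ : d ≠ 0)
    (hd : d < ℵ₀) (h : a * d = b * d) : a = b := by
  have absorb {x : Cardinal} (hx : ℵ₀ ≤ x) : x * d = x := mul_eq_left hx (hd.le.trans hx) hd₀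
  have lt_aleph0_of_mul_eq {x y : Cardinal} (hxy : x * d = y * d) (hx : x < ℵ₀) : y < ℵ₀ := by
    by_contra! hy
    exact (absorb hy ▸ hxy ▸ mul_lt_aleph0 hx hd).not_ge hy
  rcases lt_or_ge a ℵ₀ with ha | ha
  · lift b to ℕ using lt_aleph0_of_mul_eq h ha
    lift a to ℕ using ha
    lift d to ℕ using hd
    norm_cast at h hd₀ ⊢
    exact Nat.eq_of_mul_eq_mul_right (Nat.pos_of_ne_zero hd₀) h
  · have hb : ℵ₀ ≤ b := not_lt.mp fun hb => ha.not_gt (lt_aleph0_of_mul_eq h.symm hb)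
    rw [← absorb ha, h, absorb hb]

theorem Subfield.relrank_ne_zero {L : Type u} [Field L] {E M : Subfield L} (h : E ≤ M) :
    E.relrank M ≠ 0 := by
  rw [relrank_eq_rank_of_le h]
  exact rank_pos.ne'

variable {p : ℕ} [Fact p.Prime]

namespace pthPowerSubfield

variable {K L : Type u} [Field K] [Field L] [CharP K p] [CharP L p]

theorem comap_map_frobenius_fieldRange (f : K →+* L) :
    (f.fieldRange.map (frobenius L p)).comap f = pthPowerSubfield K p := by
  ext x
  simp only [Subfield.mem_comap, Subfield.mem_map, RingHom.mem_fieldRange, pthPowerSubfield,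
    frobenius_def]
  constructor
  · rintro ⟨_, ⟨y, rfl⟩, hy⟩
    exact ⟨y, f.injective (by rw [map_pow, hy])⟩
  · rintro ⟨y, rfl⟩
    exact ⟨f y, ⟨y, rfl⟩, (map_pow f y p).symm⟩

theorem rank_eq_relrank (f : K →+* L) :
    Module.rank (pthPowerSubfield K p) K =
      (f.fieldRange.map (frobenius L p)).relrank f.fieldRange := by
  rw [← Subfield.rank_comap, comap_map_frobenius_fieldRange]

theorem map_mem (f : K →+* L) {x : K} (hx : x ∈ pthPowerSubfield K p) :
    f x ∈ pthPowerSubfield L p := by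
  obtain ⟨y, rfl⟩ := hx
  exact ⟨f y, by simp only [frobenius_def, map_pow]⟩

theorem linearIndependent_of_comp (f : K →+* L) {ι : Type*} {v : ι → K}
    (hv : LinearIndependent (pthPowerSubfield L p) (f ∘ v)) :
    LinearIndependent (pthPowerSubfield K p) v := by
  rw [linearIndependent_iff'] at hv ⊢
  intro s c hc i hi
  have hfc : f (c i) = 0 := congrArg Subtype.val <|
    hv s (fun j => ⟨f (c j), map_mem f (c j).2⟩)
      (by simpa [Subfield.smul_def, smul_eq_mul] using congrArg f hc) i hi
  exact Subtype.ext (f.injective (by simpa using hfc))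

end pthPowerSubfield

namespace Subfield

variable {L : Type u} [Field L] [CharP L p]

theorem map_frobenius_le (E : Subfield L) : E.map (frobenius L p) ≤ E := by
  rintro _ ⟨x, hx, rfl⟩
  exact pow_mem hx p

theorem relrank_map_frobenius_eq {E M : Subfield L} (hEM : E ≤ M) (hfin : E.relrank M < ℵ₀) :
    (M.map (frobenius L p)).relrank M = (E.map (frobenius L p)).relrank E := by
  have tower : (E.map (frobenius L p)).relrank E * E.relrank M =
      (M.map (frobenius L p)).relrank M * E.relrank M := by
    rw [relrank_mul_relrank (map_frobenius_le E) hEM,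
      ← relrank_mul_relrank ((gc_map_comap _).monotone_l hEM) (map_frobenius_le M),
      relrank_map_map, mul_comm]
  exact (Cardinal.eq_of_mul_eq_mul_right_of_lt_aleph0 (relrank_ne_zero hEM) hfin tower).symm

end Subfield

theorem IntermediateField.rank_pthPowerSubfield_eq {K L : Type u} [Field K] [Field L] [CharP K p]
    [CharP L p] [Algebra K L] (M : IntermediateField K L) [FiniteDimensional K M] :
    Module.rank (pthPowerSubfield M p) M = Module.rank (pthPowerSubfield K p) K := by
  have hfin : (⊥ : IntermediateField K L).relrank M < ℵ₀ := by
    rw [IntermediateField.relrank_bot_left]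
    exact Module.rank_lt_aleph0 K M
  rw [pthPowerSubfield.rank_eq_relrank (M.val : M →+* L), ← AlgHom.fieldRange_toSubfield,
    IntermediateField.fieldRange_val, pthPowerSubfield.rank_eq_relrank (algebraMap K L),
    ← IntermediateField.bot_toSubfield]
  exact Subfield.relrank_map_frobenius_eq (bot_le (a := M)) hfin

theorem rank_pthPower_le_of_algebraic
    (K L : Type u) [Field K] [Field L] (p : ℕ) [Fact p.Prime] [CharP K p] [CharP L p]
    [Algebra K L] [Algebra.IsAlgebraic K L]
    [FiniteDimensional (pthPowerSubfield K p) K] :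
    Module.rank (pthPowerSubfield L p) L ≤ Module.rank (pthPowerSubfield K p) K := by
  rw [← Module.finrank_eq_rank (pthPowerSubfield K p) K]
  refine rank_le fun s hs => ?_
  let M := IntermediateField.adjoin K (s : Set L)
  have : FiniteDimensional K M :=
    IntermediateField.finiteDimensional_adjoin fun x _ => Algebra.IsIntegral.isIntegral x
  have hsM : LinearIndependent (pthPowerSubfield M p)
      fun i : s => (⟨i, IntermediateField.subset_adjoin K _ i.2⟩ : M) :=
    pthPowerSubfield.linearIndependent_of_comp (M.val : M →+* L) hs
  have hcard := hsM.cardinal_le_rank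
  rwa [M.rank_pthPowerSubfield_eq, ← Module.finrank_eq_rank, Cardinal.mk_coe_finset,
    Nat.cast_le] at hcard
end

section
/- Let K be a field of characteristic p > 0 and let L be a finite field extension of K. If [K:K^p] is finite, then [L:L^p] = [K:K^p]. -/
/-!
Frobenius maps `K ≃ K^p` and `L ≃ L^p` compatibly with `K → L`, so `[L^p : K^p] = [L : K]`.
Comparing the towers `K^p ⊆ K ⊆ L` and `K^p ⊆ L^p ⊆ L` and cancelling the finite, nonzero
`[L : K]` gives `[L : L^p] = [K : K^p]`.
-/

universe u

open Module

theorem rank_eq_rank_of_rank_eq_of_tower {F K E L : Type u} [Field F] [Field K] [Field E]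
    [Field L] [Algebra F K] [Algebra K L] [Algebra F L] [IsScalarTower F K L]
    [Algebra F E] [Algebra E L] [IsScalarTower F E L]
    [FiniteDimensional F K] [FiniteDimensional K L]
    (h : Module.rank K L = Module.rank F E) : Module.rank E L = Module.rank F K := by
  have : FiniteDimensional F E := rank_lt_aleph0_iff.mp (h ▸ rank_lt_aleph0 K L)
  have : FiniteDimensional F L := .trans F K L
  have : FiniteDimensional E L := .right F E L
  rw [← finrank_eq_rank, ← finrank_eq_rank, Nat.cast_inj] at h ⊢
  refine Nat.eq_of_mul_eq_mul_left (finrank_pos (R := K) (M := L)) ?_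
  calc finrank K L * finrank E L = finrank F E * finrank E L := by rw [h]
    _ = finrank F L := finrank_mul_finrank F E L
    _ = finrank K L * finrank F K := by rw [← finrank_mul_finrank F K L, mul_comm]

namespace pthPowerSubfield

variable (K L : Type u) [Field K] [Field L] (p : ℕ) [Fact p.Prime] [CharP K p] [CharP L p]

noncomputable def frobeniusEquiv : K ≃+* pthPowerSubfield K p :=
  (frobenius K p).rangeRestrictFieldEquiv

variable [Algebra K L]

theorem algebraMap_mem {x : K} (hx : x ∈ pthPowerSubfield K p) :
    algebraMap K L x ∈ pthPowerSubfield L p := by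
  obtain ⟨y, rfl⟩ := hx
  exact ⟨algebraMap K L y, ((algebraMap K L).map_frobenius p y).symm⟩

instance : Algebra (pthPowerSubfield K p) (pthPowerSubfield L p) :=
  ((algebraMap K L).restrict _ _ fun _ => algebraMap_mem K L p).toAlgebra

instance : IsScalarTower (pthPowerSubfield K p) (pthPowerSubfield L p) L :=
  IsScalarTower.of_algebraMap_eq fun _ => rfl

theorem rank_eq_rank :
    Module.rank (pthPowerSubfield K p) (pthPowerSubfield L p) = Module.rank K L :=
  (Algebra.rank_eq_of_equiv_equiv (frobeniusEquiv K p) (frobeniusEquiv L p) <|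
    RingHom.ext fun x => Subtype.ext ((algebraMap K L).map_frobenius p x)).symm

end pthPowerSubfield

theorem rank_pthPower_eq_of_finite_extension
    (K L : Type u) [Field K] [Field L] (p : ℕ) [Fact p.Prime] [CharP K p] [CharP L p]
    [Algebra K L] [FiniteDimensional K L]
    [FiniteDimensional (pthPowerSubfield K p) K] :
    Module.rank (pthPowerSubfield L p) L = Module.rank (pthPowerSubfield K p) K :=
  rank_eq_rank_of_rank_eq_of_tower (pthPowerSubfield.rank_eq_rank K L p).symm
end

section
/- The Frobenius endomorphism of any valuation ring of characteristic p > 0 is faithfully flat. In particular, every valuation ring of characteristic p is F-pure (Frobenius is a pure ring map). -/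
open TensorProduct

/-- A copy of `V` regarded as a module over itself via the Frobenius endomorphism. -/
def FrobPushforward (V : Type*) : Type _ := V

universe u

/-!
Over a valuation ring (more generally a Bézout domain) flatness is the same as torsion-freeness,
and an injective ring map of domains makes the target torsion-free, so the Frobenius of a
valuation ring of characteristic `p` is flat. It is also a local homomorphism, since `a ^ p` is a
unit only if `a` is; a flat local homomorphism of local rings is faithfully flat, and
faithful flatness implies purity.
-/

theorem Module.Flat.of_isTorsionFree_of_isBezout (R M : Type*) [CommRing R] [IsDomain R]
    [IsBezout R] [AddCommGroup M] [Module R M] [Module.IsTorsionFree R M] : Module.Flat R M :=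
  Module.Flat.flat_iff_torsion_eq_bot_of_isBezout.mpr
    (Submodule.isTorsionFree_iff_torsion_eq_bot.mp ‹_›)

theorem isLocalHom_frobenius (R : Type*) [CommSemiring R] (p : ℕ) [ExpChar R p] :
    IsLocalHom (frobenius R p) :=
  ⟨fun _ ha => (isUnit_pow_iff (expChar_ne_zero R p)).mp ha⟩

theorem Module.FaithfullyFlat.of_injective_of_isLocalHom_of_valuationRing
    (A B : Type*) [CommRing A] [IsDomain A] [ValuationRing A] [CommRing B] [IsDomain B]
    [IsLocalRing B] [Algebra A B] (hinj : Function.Injective (algebraMap A B))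
    [IsLocalHom (algebraMap A B)] : Module.FaithfullyFlat A B :=
  have : Module.IsTorsionFree A B := Module.isTorsionFree_iff_algebraMap_injective.mpr hinj
  have : Module.Flat A B := Module.Flat.of_isTorsionFree_of_isBezout A B
  Module.FaithfullyFlat.of_flat_of_isLocalHom

theorem frobenius_faithfully_flat_and_pure
    (V : Type u) [CommRing V] [IsDomain V] [ValuationRing V]
    (p : ℕ) [Fact p.Prime] [CharP V p] :
    letI : CommRing (FrobPushforward V) := ‹CommRing V›
    letI : Module V (FrobPushforward V) :=
      letI : Module V (FrobPushforward V) := by unfold FrobPushforward; exact inferInstance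
      Module.compHom (FrobPushforward V) (frobenius V p)
    Module.FaithfullyFlat V (FrobPushforward V) ∧
      ∀ (M : Type u) [AddCommGroup M] [Module V M],
        Function.Injective
          (fun m : M => ((1 : FrobPushforward V) ⊗ₜ[V] m : FrobPushforward V ⊗[V] M)) := by
  let : CommRing (FrobPushforward V) := ‹CommRing V›
  -- its underlying module is definitionally the `Module.compHom` structure of the statement
  let : Algebra V (FrobPushforward V) := (frobenius V p).toAlgebra
  have : IsDomain (FrobPushforward V) := ‹IsDomain V›
  have : IsLocalRing (FrobPushforward V) := inferInstanceAs (IsLocalRing V)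
  have : IsLocalHom (algebraMap V (FrobPushforward V)) := isLocalHom_frobenius V p
  have hff : Module.FaithfullyFlat V (FrobPushforward V) :=
    .of_injective_of_isLocalHom_of_valuationRing V _ (frobenius_inj V p)
  exact ⟨hff, fun M _ _ =>
    Module.FaithfullyFlat.tensorProduct_mk_injective (A := V) (B := FrobPushforward V) M⟩
end

section
/- Let V be a valuation ring of characteristic p > 0 with fraction field K such that [K:K^p] is finite. Then V is F-finite (i.e., V is a finite V^p-module) if and only if V is a free V^p-module of rank [K:K^p]. -/
/-!
The Frobenius image `V^p` is again a valuation ring, and `V` is a torsion-free `V^p`-module.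
Over a valuation ring torsion-free means flat, and a finite flat module over a local ring is
free. The rank is read off after inverting the nonzero elements of `V^p`: this turns `V^p`
into `K^p`, and turns `V` into `K` because `a / d = a d^(p-1) / d^p`. Hence
`rank_{V^p} V = [K : K^p]`, and conversely a free module of finite rank is finite.
-/

universe u

open Module nonZeroDivisors

theorem RingHom.valuationRing_range {A B : Type*} [CommRing A] [IsDomain A] [ValuationRing A]
    [CommRing B] [IsDomain B] (f : A →+* B) : ValuationRing f.range :=
  f.rangeRestrict_surjective.valuationRing

theorem ValuationRing.free_of_isTorsionFree {R M : Type*} [CommRing R] [IsDomain R]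
    [ValuationRing R] [AddCommGroup M] [Module R M] [Module.Finite R M] [Module.IsTorsionFree R M] :
    Free R M :=
  have : Flat R M := Flat.flat_iff_torsion_eq_bot_of_isBezout.mpr
    (Submodule.isTorsionFree_iff_torsion_eq_bot.mp ‹_›)
  free_of_flat_of_isLocalRing

section Frobenius

variable (V : Type u) [CommRing V] (K : Type u) [Field K] [Algebra V K]
  (p : ℕ) [Fact p.Prime] [CharP V p] [CharP K p]

theorem pow_mem_frobenius_range (v : V) : v ^ p ∈ (frobenius V p).range :=
  ⟨v, frobenius_def p v⟩

theorem algebraMap_mem_pthPowerSubfield (r : (frobenius V p).range) :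
    algebraMap V K r ∈ pthPowerSubfield K p := by
  obtain ⟨v, hv⟩ := r.2
  exact ⟨algebraMap V K v, by rw [← hv, frobenius_def, frobenius_def, map_pow]⟩

instance : Algebra (frobenius V p).range (pthPowerSubfield K p) :=
  ((algebraMap (frobenius V p).range K).codRestrict _
    (algebraMap_mem_pthPowerSubfield V K p)).toAlgebra

@[simp]
theorem coe_algebraMap_pthPowerSubfield (r : (frobenius V p).range) :
    (algebraMap (frobenius V p).range (pthPowerSubfield K p) r : K) = algebraMap V K r :=
  rfl

instance : IsScalarTower (frobenius V p).range (pthPowerSubfield K p) K :=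
  .of_algebraMap_eq fun _ ↦ rfl

variable [IsDomain V] [IsFractionRing V K]

instance : IsFractionRing (frobenius V p).range (pthPowerSubfield K p) := by
  have : FaithfulSMul (frobenius V p).range (pthPowerSubfield K p) :=
    (faithfulSMul_iff_algebraMap_injective _ _).mpr fun r s h ↦
      Subtype.ext (IsFractionRing.injective V K (congrArg Subtype.val h))
  refine .of_field _ _ fun ⟨z, y, hy⟩ ↦ ?_
  obtain ⟨a, d, -, rfl⟩ := IsFractionRing.div_surjective V y
  refine ⟨⟨_, pow_mem_frobenius_range V p a⟩, ⟨_, pow_mem_frobenius_range V p d⟩, ?_⟩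
  ext
  simp [← hy, frobenius_def]

instance : IsLocalization (Algebra.algebraMapSubmonoid V (frobenius V p).range⁰) K := by
  refine (IsLocalization.iff_of_le_of_exists_dvd _ V⁰ ?_ fun d hd ↦ ?_).mpr ‹_›
  · rintro _ ⟨r, hr, rfl⟩
    exact mem_nonZeroDivisors_of_ne_zero fun h ↦ nonZeroDivisors.ne_zero hr (Subtype.ext h)
  · refine ⟨d ^ p, ⟨⟨_, pow_mem_frobenius_range V p d⟩, ?_, rfl⟩,
      dvd_pow_self d (Fact.out : p.Prime).ne_zero⟩
    exact mem_nonZeroDivisors_of_ne_zero fun h ↦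
      pow_ne_zero p (nonZeroDivisors.ne_zero hd) (congrArg Subtype.val h)

theorem rank_pthPowerSubfield :
    Module.rank (pthPowerSubfield K p) K = Module.rank (frobenius V p).range V := by
  rw [IsLocalization.rank_eq (pthPowerSubfield K p) (frobenius V p).range⁰ le_rfl,
    IsLocalizedModule.rank_eq (frobenius V p).range⁰ le_rfl
      (IsScalarTower.toAlgHom (frobenius V p).range V K).toLinearMap]

end Frobenius

theorem valuationRing_fFinite_iff_free_of_rank_general
    (V : Type u) [CommRing V] [IsDomain V] [ValuationRing V]
    (K : Type u) [Field K] [Algebra V K] [IsFractionRing V K]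
    (p : ℕ) [Fact p.Prime] [CharP V p] [CharP K p] :
    Module.Finite (frobenius V p).range V ↔
      (Module.Free (frobenius V p).range V ∧
        Module.rank (frobenius V p).range V =
          (Module.finrank (pthPowerSubfield K p) K : Cardinal)) := by
  -- must be found before `V^p` is known to be a valuation ring: after that, instance search
  -- detours through flatness and times out
  have : Module.IsTorsionFree (frobenius V p).range V := inferInstance
  have := (frobenius V p).valuationRing_range
  refine ⟨fun _ ↦ ⟨ValuationRing.free_of_isTorsionFree, ?_⟩, fun ⟨_, hrank⟩ ↦ ?_⟩
  · rw [finrank, rank_pthPowerSubfield V, ← finrank, finrank_eq_rank]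
  · exact rank_lt_aleph0_iff.mp (hrank ▸ Cardinal.natCast_lt_aleph0)

theorem valuationRing_fFinite_iff_free_of_rank
    (V : Type u) [CommRing V] [IsDomain V] [ValuationRing V]
    (K : Type u) [Field K] [Algebra V K] [IsFractionRing V K]
    (p : ℕ) [Fact p.Prime] [CharP V p] [CharP K p]
    [FiniteDimensional (pthPowerSubfield K p) K] :
    Module.Finite (frobenius V p).range V ↔
      (Module.Free (frobenius V p).range V ∧
        Module.rank (frobenius V p).range V =
          (Module.finrank (pthPowerSubfield K p) K : Cardinal)) :=
  valuationRing_fFinite_iff_free_of_rank_general V K p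
end

section
/- Let V be a valuation ring of characteristic p > 0 with maximal ideal m and residue field κ. If m is not finitely generated as an ideal, then m^{[p]} = m. -/
/-!
If the maximal ideal `m` of a valuation ring is not principal, every `x ∈ m` factors as `y * t`
with `y, t ∈ m`. Iterating, and using that divisibility is a total preorder, `x` is divisible by
`y ^ n` for some `y ∈ m`, for every `n`. With `n = p` this puts `x` in `m^[p]`.
-/

universe u

open IsLocalRing

namespace PreValuationRing

variable {R : Type*} [CommRing R] [Nontrivial R] [PreValuationRing R]

theorem exists_mul_eq_of_mem_maximalIdeal (hm : ¬ (maximalIdeal R).IsPrincipal) {x : R}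
    (hx : x ∈ maximalIdeal R) : ∃ y ∈ maximalIdeal R, ∃ t ∈ maximalIdeal R, y * t = x := by
  have hlt : Ideal.span {x} < maximalIdeal R :=
    lt_of_le_of_ne ((Ideal.span_singleton_le_iff_mem _).mpr hx) fun he => hm ⟨⟨x, he.symm⟩⟩
  obtain ⟨y, hy, hyx⟩ := SetLike.exists_of_lt hlt
  rw [Ideal.mem_span_singleton] at hyx
  obtain ⟨t, rfl⟩ := (ValuationRing.dvd_total x y).resolve_left hyx
  refine ⟨y, hy, t, ?_, rfl⟩
  by_contra ht
  exact hyx ((IsUnit.mul_right_dvd (notMem_maximalIdeal.mp ht)).mpr dvd_rfl)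

theorem exists_pow_dvd_of_mem_maximalIdeal (hm : ¬ (maximalIdeal R).IsPrincipal) (n : ℕ)
    {x : R} (hx : x ∈ maximalIdeal R) : ∃ y ∈ maximalIdeal R, y ^ n ∣ x := by
  induction n generalizing x with
  | zero => exact ⟨x, hx, by simp⟩
  | succ n ih =>
    obtain ⟨y, hy, t, ht, rfl⟩ := exists_mul_eq_of_mem_maximalIdeal hm hx
    obtain ⟨z, hz, hzt⟩ := ih ht
    rw [mul_comm y t]
    rcases ValuationRing.dvd_total y z with hyz | hzy
    · exact ⟨y, hy, pow_succ y n ▸ mul_dvd_mul ((pow_dvd_pow_of_dvd hyz n).trans hzt) dvd_rfl⟩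
    · exact ⟨z, hz, pow_succ z n ▸ mul_dvd_mul hzt hzy⟩

end PreValuationRing

theorem Ideal.map_frobenius_eq_self {R : Type*} [CommRing R] (p : ℕ) [ExpChar R p] {I : Ideal R}
    (hI : ∀ x ∈ I, ∃ y ∈ I, y ^ p ∣ x) : I.map (frobenius R p) = I := by
  refine le_antisymm (Ideal.map_le_iff_le_comap.mpr fun x hx => ?_) fun x hx => ?_
  · exact I.pow_mem_of_mem hx p (expChar_pos R p)
  · obtain ⟨y, hy, c, rfl⟩ := hI x hx
    exact Ideal.mul_mem_right c _ (Ideal.mem_map_of_mem (frobenius R p) hy)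

theorem frobenius_power_of_maximalIdeal_not_fg
    (V : Type u) [CommRing V] [IsDomain V] [ValuationRing V]
    (p : ℕ) [Fact p.Prime] [CharP V p]
    (h : ¬ (IsLocalRing.maximalIdeal V).FG) :
    Ideal.map (frobenius V p) (IsLocalRing.maximalIdeal V) = IsLocalRing.maximalIdeal V :=
  Ideal.map_frobenius_eq_self p fun _ hx =>
    PreValuationRing.exists_pow_dvd_of_mem_maximalIdeal (fun hP => h hP.fg) p hx
end

section
/- Let V be an F-finite valuation ring of characteristic p > 0 whose maximal ideal is not finitely generated. Then the value group Γ of V is p-divisible, i.e., Γ = pΓ. -/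
universe u

/-!
Since the maximal ideal `𝔪` of `V` is not finitely generated, the values below `1` have no
largest element, so every value `α < 1` is at most `γ ^ p` for some `γ < 1`. Hence every
element of `𝔪` is the `p`-th power of a nonunit times an element of `V`, i.e. `𝔪 = 𝔪_{V^p} V`.
Now write `a ∈ V` as `∑ cᵢ ^ p xᵢ` over a minimal generating set of `V` over `V^p` and factor out
the `cᵢ ^ p` of largest value: `a = c ^ p w` with `w = x₀ + ∑ dᵢ ^ p xᵢ`. If `w` lay in
`𝔪 = 𝔪_{V^p} V`, Nakayama's lemma would make `x₀` redundant; so `w` is a unit and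
`v a = (v c) ^ p`.
-/

open IsLocalRing Submodule

instance RingHom.isLocalRing_range {R S : Type*} [CommRing R] [IsLocalRing R] [CommRing S]
    [Nontrivial S] (f : R →+* S) : IsLocalRing f.range :=
  .of_surjective' f.rangeRestrict f.rangeRestrict_surjective

section Nakayama

variable {R M : Type*} [CommRing R] [IsLocalRing R] [AddCommGroup M] [Module R M]
  [Module.Finite R M]

theorem Submodule.span_eq_top_of_mem_sup_maximalIdeal_smul {t : Set M} {x : M}
    (htop : span R (insert x t) = ⊤) (hx : x ∈ span R t ⊔ maximalIdeal R • ⊤) :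
    span R t = ⊤ := by
  refine top_le_iff.mp <| le_of_le_smul_of_le_jacobson_bot Module.Finite.fg_top
    (maximalIdeal_le_jacobson ⊥) ?_
  refine htop.ge.trans (span_le.mpr (Set.insert_subset_iff.mpr ⟨hx, ?_⟩))
  exact fun y hy => mem_sup_left (subset_span hy)

theorem Submodule.notMem_sup_maximalIdeal_smul_of_card_eq_spanFinrank [DecidableEq M]
    {s : Finset M} (hs : span R (s : Set M) = ⊤)
    (hcard : s.card = (⊤ : Submodule R M).spanFinrank) {x : M} (hx : x ∈ s) :
    x ∉ span R (s.erase x : Set M) ⊔ maximalIdeal R • ⊤ := by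
  intro hmem
  have htop := span_eq_top_of_mem_sup_maximalIdeal_smul (by
    rwa [← Finset.coe_insert, Finset.insert_erase hx]) hmem
  have := spanFinrank_span_le_ncard_of_finite (R := R) (s.erase x).finite_toSet
  rw [htop, Set.ncard_coe_finset, ← hcard] at this
  exact (Finset.card_erase_lt_of_mem hx).not_ge this

end Nakayama

theorem frobenius_rangeRestrict_mem_maximalIdeal {A : Type*} [CommRing A] [IsLocalRing A]
    (p : ℕ) [ExpChar A p] {x : A} (hx : x ∈ maximalIdeal A) :
    (frobenius A p).rangeRestrict x ∈ maximalIdeal (frobenius A p).range := fun hu =>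
  hx <| (isUnit_pow_iff (expChar_ne_zero A p)).mp (hu.map (frobenius A p).range.subtype)

theorem exists_lt_one_le_pow {Γ₀ : Type*} [LinearOrderedCommGroupWithZero Γ₀]
    (h : ∀ α < (1 : Γ₀), ∃ β, α < β ∧ β < 1) (n : ℕ) :
    ∀ α < (1 : Γ₀), ∃ γ < 1, α ≤ γ ^ n := by
  induction n with
  | zero => exact fun α hα => ⟨α, hα, by simpa using hα.le⟩
  | succ n ih =>
    intro α hα
    obtain ⟨β, hαβ, hβ⟩ := h α hα
    have hβ0 : 0 < β := pos_of_gt hαβ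
    obtain ⟨γ, hγ, hαγ⟩ := ih (α / β) ((div_lt_one₀ hβ0).mpr hαβ)
    refine ⟨max β γ, max_lt hβ hγ, ?_⟩
    calc α = β * (α / β) := (mul_div_cancel₀ α hβ0.ne').symm
      _ ≤ max β γ * max β γ ^ n :=
        mul_le_mul' (le_max_left _ _) (hαγ.trans (pow_le_pow_left' (le_max_right _ _) n))
      _ = max β γ ^ (n + 1) := (pow_succ' _ _).symm

namespace Valuation

variable {K : Type*} [Field K] {Γ₀ : Type*} [LinearOrderedCommGroupWithZero Γ₀]
  {v : Valuation K Γ₀}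

theorem integer_mem_maximalIdeal_iff {x : v.integer} : x ∈ maximalIdeal v.integer ↔ v x < 1 :=
  Integer.not_isUnit_iff_valuation_lt_one

theorem exists_between_lt_one_of_maximalIdeal_not_fg (hsurj : Function.Surjective v)
    (hm : ¬ (maximalIdeal v.integer).FG) : ∀ α < (1 : Γ₀), ∃ β, α < β ∧ β < 1 := by
  intro α hα
  by_contra! hgap
  apply hm
  refine IsPrincipal.fg <|
    (integer.integers v).isPrincipal_iff_exists_isGreatest.mpr ⟨α, ?_, ?_⟩
  · obtain ⟨x, rfl⟩ := hsurj α
    exact ⟨⟨x, hα.le⟩, integer_mem_maximalIdeal_iff.mpr hα, rfl⟩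
  · rintro _ ⟨y, hy, rfl⟩
    by_contra! hαy
    exact (integer_mem_maximalIdeal_iff.mp hy).not_ge (hgap _ hαy)

theorem exists_sum_pow_mul_eq_pow_mul_add_sum {ι : Type*} [DecidableEq ι] {s : Finset ι}
    (hs : s.Nonempty) (c f : ι → v.integer) (n : ℕ) :
    ∃ i₀ ∈ s, ∃ d : ι → v.integer, ∑ i ∈ s, c i ^ n * f i =
      c i₀ ^ n * (f i₀ + ∑ i ∈ s.erase i₀, d i ^ n * f i) := by
  obtain ⟨i₀, hi₀, hmax⟩ := s.exists_max_image (fun i => v (c i)) hs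
  have hdvd : ∀ i ∈ s, c i₀ ∣ c i := fun i hi => (integer.integers v).dvd_of_le (hmax i hi)
  choose! d hd using hdvd
  refine ⟨i₀, hi₀, d, ?_⟩
  rw [← Finset.add_sum_erase s _ hi₀, mul_add, Finset.mul_sum]
  congr 1
  refine Finset.sum_congr rfl fun i hi => ?_
  rw [hd i (Finset.mem_of_mem_erase hi), mul_pow, mul_assoc]

variable (p : ℕ) [Fact p.Prime] [CharP K p]

theorem integer_mem_maximalIdeal_smul_top_of_lt_one (hsurj : Function.Surjective v)
    (hpow : ∀ α < (1 : Γ₀), ∃ γ < 1, α ≤ γ ^ p) {b : v.integer} (hb : v b < 1) :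
    b ∈ (maximalIdeal (frobenius v.integer p).range • ⊤ :
      Submodule (frobenius v.integer p).range v.integer) := by
  obtain ⟨γ, hγ, hbγ⟩ := hpow _ hb
  obtain ⟨t, rfl⟩ := hsurj γ
  set t' : v.integer := ⟨t, hγ.le⟩
  obtain ⟨q, rfl⟩ : t' ^ p ∣ b :=
    (integer.integers v).dvd_of_le (by rw [map_pow, map_pow]; exact hbγ)
  exact smul_mem_smul (r := (frobenius v.integer p).rangeRestrict t')
    (frobenius_rangeRestrict_mem_maximalIdeal p (integer_mem_maximalIdeal_iff.mpr hγ)) mem_top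

theorem exists_valuation_integer_eq_pow [Module.Finite (frobenius v.integer p).range v.integer]
    (hsmall : ∀ b : v.integer, v b < 1 →
      b ∈ (maximalIdeal (frobenius v.integer p).range • ⊤ :
        Submodule (frobenius v.integer p).range v.integer))
    (a : v.integer) :
    ∃ c : v.integer, v a = v c ^ p := by
  classical
  set R := (frobenius v.integer p).range
  obtain ⟨s, hcard, hs⟩ :=
    (Module.Finite.fg_top (R := R) (M := v.integer)).exists_span_finset_card_eq_spanFinrank
  obtain ⟨f, -, rfl⟩ := mem_span_finset.mp (hs ▸ mem_top : a ∈ span R (s : Set v.integer))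
  choose c hc using fun x => RingHom.mem_range.mp (f x).2
  rcases s.eq_empty_or_nonempty with rfl | hne
  · exact ⟨0, by simp [zero_pow (Fact.out : p.Prime).ne_zero]⟩
  obtain ⟨x₀, hx₀, d, hsum⟩ := exists_sum_pow_mul_eq_pow_mul_add_sum hne c (fun x => x) p
  have hfc : ∑ x ∈ s, f x • x = ∑ x ∈ s, c x ^ p * x :=
    Finset.sum_congr rfl fun x _ => by rw [Subring.smul_def, ← hc, frobenius_def, smul_eq_mul]
  rw [hfc, hsum]
  set w := x₀ + ∑ x ∈ s.erase x₀, d x ^ p * x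
  rcases (show v w ≤ 1 from w.2).lt_or_eq with hw | hw
  · refine absurd ?_ (notMem_sup_maximalIdeal_smul_of_card_eq_spanFinrank hs hcard hx₀)
    have hmem : w - ∑ x ∈ s.erase x₀, d x ^ p * x ∈
        span R (s.erase x₀ : Set v.integer) ⊔ maximalIdeal R • ⊤ := by
      refine sub_mem (mem_sup_right (hsmall w hw)) (mem_sup_left (sum_mem fun x hx => ?_))
      simpa only [Subring.smul_def, smul_eq_mul, RingHom.coe_rangeRestrict, frobenius_def] using
        smul_mem (span R (s.erase x₀ : Set v.integer))
          ((frobenius v.integer p).rangeRestrict (d x)) (subset_span hx)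
    rwa [add_sub_cancel_right] at hmem
  · exact ⟨c x₀, by push_cast; rw [map_mul, map_pow, hw, mul_one]⟩

theorem exists_valuation_eq_pow_of_integer {n : ℕ}
    (h : ∀ a : v.integer, ∃ c : v.integer, v a = v c ^ n) (x : K) :
    ∃ y : K, v x = v y ^ n := by
  obtain ⟨a, rfl | hx⟩ := (integer.integers v).eq_algebraMap_or_inv_eq_algebraMap x
  · obtain ⟨c, hc⟩ := h a
    exact ⟨c, hc⟩
  · obtain ⟨c, hc⟩ := h a
    refine ⟨(c : K)⁻¹, ?_⟩
    rw [map_inv₀, inv_pow, ← hc, ← inv_inv x, map_inv₀, hx]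
    rfl

end Valuation

theorem valueGroup_p_divisible_of_fFinite_of_maximalIdeal_not_fg
    (K : Type u) [Field K] (p : ℕ) [Fact p.Prime] [CharP K p]
    (Γ₀ : Type u) [LinearOrderedCommGroupWithZero Γ₀]
    (v : Valuation K Γ₀) (hsurj : Function.Surjective v)
    [Module.Finite (frobenius v.integer p).range v.integer]
    (hm : ¬ (IsLocalRing.maximalIdeal v.integer).FG) :
    ∀ γ : Γ₀ˣ, ∃ δ : Γ₀ˣ, δ ^ p = γ := by
  have hpow := exists_lt_one_le_pow (v.exists_between_lt_one_of_maximalIdeal_not_fg hsurj hm) p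
  have hroot := v.exists_valuation_eq_pow_of_integer <| v.exists_valuation_integer_eq_pow p
    fun _ => v.integer_mem_maximalIdeal_smul_top_of_lt_one p hsurj hpow
  intro γ
  obtain ⟨x, hx⟩ := hsurj γ
  obtain ⟨y, hy⟩ := hroot x
  have hy0 : v y ≠ 0 := fun h => γ.ne_zero <| by
    rw [← hx, hy, h, zero_pow (Fact.out : p.Prime).ne_zero]
  refine ⟨Units.mk0 _ hy0, Units.ext ?_⟩
  rw [Units.val_pow_eq_pow_val, Units.val_mk0, ← hy, hx]
end

section
/- Every F-finite valuation ring of characteristic p > 0 is Frobenius split: the Frobenius map F: V → V admits a V-linear left inverse. -/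
/-!
Frobenius identifies `V` with the subring `V^p`, so `V^p` is again a valuation ring. The quotient
`V / V^p` is torsion-free over `V^p`: if `a^p x = c^p` with `a ≠ 0`, then `a^p ∣ c^p`, hence `a ∣ c`
because `V` is integrally closed, and `x` is a `p`-th power. Being finitely generated, `V / V^p` is
flat and therefore free over the local ring `V^p`, so the inclusion `V^p → V` has a `V^p`-linear
retraction. Composed with the inverse of Frobenius `V^p ≃ V`, it is the splitting.
-/

universe u

open Module

theorem Module.free_of_isTorsionFree_of_valuationRing {R M : Type*} [CommRing R] [IsDomain R]
    [ValuationRing R] [AddCommGroup M] [Module R M] [Module.Finite R M] [IsTorsionFree R M] :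
    Free R M :=
  have : Flat R M := Flat.flat_iff_torsion_eq_bot_of_isBezout.mpr
    (Submodule.isTorsionFree_iff_torsion_eq_bot.mp ‹_›)
  free_of_flat_of_isLocalRing

theorem LinearMap.exists_leftInverse_of_injective_of_projective {R M N : Type*} [Ring R]
    [AddCommGroup M] [AddCommGroup N] [Module R M] [Module R N]
    (f : M →ₗ[R] N) (hf : Function.Injective f) [Projective R (N ⧸ range f)] :
    ∃ l : N →ₗ[R] M, l ∘ₗ f = id := by
  obtain ⟨s, hs⟩ := projective_lifting_property (range f).mkQ id (range f).mkQ_surjective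
  have split := (f.exact_map_mkQ_range.split_tfae hf (range f).mkQ_surjective).out 0 1
  exact split.mp ⟨s, hs⟩

theorem IsIntegrallyClosed.exists_pow_eq_of_mul_pow_eq_pow {R : Type*} [CommRing R] [IsDomain R]
    [IsIntegrallyClosed R] {n : ℕ} (hn : n ≠ 0) {a x c : R} (ha : a ≠ 0)
    (h : a ^ n * x = c ^ n) : ∃ d, d ^ n = x := by
  obtain ⟨d, rfl⟩ := (IsIntegrallyClosed.pow_dvd_pow_iff hn).mp ⟨x, h.symm⟩
  exact ⟨d, mul_left_cancel₀ (pow_ne_zero n ha) (by rw [h, mul_pow])⟩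

section Frobenius

variable (V : Type*) [CommRing V] (p : ℕ) [ExpChar V p]

theorem frobenius_rangeRestrict_bijective [IsReduced V] :
    Function.Bijective (frobenius V p).rangeRestrict :=
  ⟨fun _ _ h => frobenius_inj V p (congrArg Subtype.val h), (frobenius V p).rangeRestrict_surjective⟩

instance [IsDomain V] [ValuationRing V] : ValuationRing (frobenius V p).range :=
  (frobenius V p).rangeRestrict_surjective.valuationRing

theorem isTorsionFree_quotient_frobenius_range [IsDomain V] [IsIntegrallyClosed V] :
    IsTorsionFree (frobenius V p).range
      (V ⧸ LinearMap.range (Algebra.linearMap (frobenius V p).range V)) := by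
  refine isTorsionFree_iff_smul_eq_zero.mpr fun r q hrq => ?_
  obtain ⟨x, rfl⟩ := Submodule.Quotient.mk_surjective _ q
  rw [← Submodule.Quotient.mk_smul, Submodule.Quotient.mk_eq_zero] at hrq
  rw [Submodule.Quotient.mk_eq_zero]
  obtain ⟨⟨_, c, rfl⟩, hc⟩ := hrq
  obtain ⟨_, a, rfl⟩ := r
  change c ^ p = a ^ p * x at hc
  rcases eq_or_ne a 0 with rfl | ha
  · exact .inl (Subtype.ext (map_zero (frobenius V p)))
  · obtain ⟨d, rfl⟩ := IsIntegrallyClosed.exists_pow_eq_of_mul_pow_eq_pow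
      (expChar_ne_zero V p) ha hc.symm
    exact .inr ⟨⟨d ^ p, d, rfl⟩, rfl⟩

end Frobenius

theorem fFinite_valuationRing_frobenius_split
    (V : Type u) [CommRing V] [IsDomain V] [ValuationRing V]
    (p : ℕ) [Fact p.Prime] [CharP V p]
    [Module.Finite (frobenius V p).range V] :
    ∃ φ : V →+ V, (∀ a b : V, φ (a ^ p * b) = a * φ b) ∧ φ 1 = 1 := by
  set R := (frobenius V p).range
  have := isTorsionFree_quotient_frobenius_range V p
  have : Free R (V ⧸ LinearMap.range (Algebra.linearMap R V)) := free_of_isTorsionFree_of_valuationRing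
  obtain ⟨ψ, hψ⟩ := (Algebra.linearMap R V).exists_leftInverse_of_injective_of_projective
    Subtype.val_injective
  let e : V ≃+* R := .ofBijective _ (frobenius_rangeRestrict_bijective V p)
  refine ⟨(e.symm : R →+* V).toAddMonoidHom.comp ψ.toAddMonoidHom, fun a b => ?_, ?_⟩
  · have : a ^ p * b = e a • b := rfl
    simp [this, map_smul]
  · have : ψ 1 = 1 := LinearMap.congr_fun hψ 1
    simp [this]
end

section
/- Every complete discrete valuation ring of prime characteristic p is Frobenius split. -/
universe u

/-!
Let `R = V^p` be the image of Frobenius. Since Frobenius is an isomorphism `V ≃+* R`, a Frobenius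
splitting is the same as an `R`-linear retraction `V → R` of the inclusion. The subring `R` is pure
in `V` (`a^p ∣ b^p` forces `a ∣ b`) and closed, and such a subring of a complete DVR is a direct
summand, by the non-archimedean Hahn–Banach argument: Zorn's lemma gives a maximal partial
retraction `f` with `z ∣ f z`. Extending `f` to `x` amounts to choosing a value `y` in all the
balls `{y | a x + z ∣ a y + f z}`. These balls are nonempty by purity and totally ordered by
inclusion, so either one of them is smallest, or their radii are unbounded and, by completeness,
a sequence of their points converges to a point of all of them.
-/

namespace IsDiscreteValuationRing

section Valuation

variable {V : Type*} [CommRing V] [IsDomain V] [IsDiscreteValuationRing V] {π : V}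

theorem exists_dvd_pow_of_ne_zero (hπ : Irreducible π) {c : V} (hc : c ≠ 0) :
    ∃ n : ℕ, c ∣ π ^ n := by
  obtain ⟨n, u, rfl⟩ := eq_unit_mul_pow_irreducible hc hπ
  exact ⟨n, Units.mul_left_dvd.2 dvd_rfl⟩

theorem mul_dvd_of_not_dvd (hπ : Irreducible π) {a b : V} (h : ¬a ∣ b) : π * b ∣ a := by
  rw [← addVal_le_iff_dvd, not_le] at h
  rw [← addVal_le_iff_dvd, addVal_mul, addVal_uniformizer hπ, add_comm]
  exact Order.add_one_le_of_lt h

theorem eq_zero_of_forall_pow_dvd (hπ : Irreducible π) {x : V} (h : ∀ n : ℕ, π ^ n ∣ x) :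
    x = 0 := by
  by_contra hx
  obtain ⟨n, hn⟩ := exists_dvd_pow_of_ne_zero hπ hx
  have := (pow_dvd_pow_iff hπ.ne_zero hπ.not_isUnit).1 ((h (n + 1)).trans hn)
  omega

theorem exists_pow_dvd_sub_of_pow_dvd_sub [IsAdicComplete (IsLocalRing.maximalIdeal V) V]
    (hπ : Irreducible π) {y : ℕ → V} (hy : ∀ m n, m ≤ n → π ^ m ∣ y n - y m) :
    ∃ L : V, ∀ n, π ^ n ∣ L - y n := by
  have hmem (n : ℕ) (w : V) :
      w ∈ (IsLocalRing.maximalIdeal V ^ n • ⊤ : Ideal V) ↔ π ^ n ∣ w := by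
    rw [← Ideal.one_eq_top, Ideal.smul_eq_mul, mul_one, hπ.maximalIdeal_eq,
      Ideal.span_singleton_pow, Ideal.mem_span_singleton]
  obtain ⟨L, hL⟩ := (IsAdicComplete.toIsPrecomplete (I := IsLocalRing.maximalIdeal V)
      (M := V)).prec (f := y) fun {m n} hmn => by
    rw [SModEq.sub_mem, hmem, ← dvd_neg, neg_sub]
    exact hy m n hmn
  refine ⟨L, fun n => ?_⟩
  rw [← hmem, ← neg_mem_iff (G := V), neg_sub, ← SModEq.sub_mem]
  exact hL n

end Valuation

section PartialRetraction

variable {V : Type*} [CommRing V] {R : Subring V}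

def IsContractive (f : V →ₗ.[R] R) : Prop :=
  ∀ z : f.domain, (z : V) ∣ (f z : V)

theorem IsContractive.sSup {c : Set (V →ₗ.[R] R)} (hc : DirectedOn (· ≤ ·) c) (hne : c.Nonempty)
    (h : ∀ f ∈ c, IsContractive f) : IsContractive (LinearPMap.sSup c hc) := by
  rintro ⟨z, hz⟩
  obtain ⟨f, hf, hzf⟩ := (LinearPMap.mem_domain_sSup_iff hne hc).1 hz
  rw [LinearPMap.sSup_apply hc hf ⟨z, hzf⟩]
  exact h f hf ⟨z, hzf⟩

/-- The admissible values at `x` of a contractive extension of `f`, as seen from `a • x + z`: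
the ball of radius `v (a x + z) - v a` around `-f z / a`. Thus `a (b x + w) ∣ b (a x + z)` says
that the radius for `(a, z)` is at least the radius for `(b, w)`. -/
def ball (f : V →ₗ.[R] R) (x : V) (a : R) (z : f.domain) : Set R :=
  {y | (a * x + z : V) ∣ a * y + f z}

variable {f : V →ₗ.[R] R} {x : V}

theorem mem_ball {a : R} {z : f.domain} {y : R} :
    y ∈ ball f x a z ↔ (a * x + z : V) ∣ a * y + f z :=
  Iff.rfl

theorem exists_extension_of_forall_mem_ball {y : R} (hy : ∀ a z, y ∈ ball f x a z) :
    ∃ g : V →ₗ.[R] R, f ≤ g ∧ x ∈ g.domain ∧ IsContractive g := by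
  have hexact (a : R) (z : f.domain) (h : (a * x + z : V) = 0) : (a * y + f z : V) = 0 :=
    zero_dvd_iff.1 (h ▸ hy a z)
  let g : V →ₗ.[R] R := LinearPMap.mkSpanSingleton' x y fun c hc => by
    have := hexact c 0 (by simpa [Subring.smul_def] using hc)
    ext
    simpa [Subring.smul_def] using this
  have hfg (z : f.domain) (w : g.domain) (hzw : (z : V) = w) : f z = g w := by
    obtain ⟨w, hw⟩ := w
    obtain ⟨c, rfl⟩ := Submodule.mem_span_singleton.1 hw
    rw [LinearPMap.mkSpanSingleton'_apply]
    have := hexact (-c) z (by simp [hzw, Subring.smul_def])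
    ext
    push_cast [Subring.smul_def, RingHom.id_apply, smul_eq_mul] at this ⊢
    linear_combination this
  refine ⟨f.sup g hfg, f.left_le_sup g hfg,
    Submodule.mem_sup_right (Submodule.mem_span_singleton_self x), ?_⟩
  rintro ⟨u, hu⟩
  obtain ⟨z, hz, w, hw, rfl⟩ := Submodule.mem_sup.1 hu
  obtain ⟨c, rfl⟩ := Submodule.mem_span_singleton.1 hw
  rw [show f.sup g hfg ⟨z + c • x, hu⟩ = f ⟨z, hz⟩ + g ⟨c • x, hw⟩ from
    LinearPMap.sup_apply hfg _ _ _ rfl, LinearPMap.mkSpanSingleton'_apply]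
  simpa [mem_ball, add_comm, Subring.smul_def] using hy c ⟨z, hz⟩

theorem ball_subset_ball [IsDomain V] (hf : IsContractive f) {a b : R} (ha : (a : V) ≠ 0)
    {z w : f.domain} (h : (a : V) * (b * x + w) ∣ b * (a * x + z)) :
    ball f x a z ⊆ ball f x b w := by
  intro y hy
  rw [mem_ball] at hy ⊢
  apply (mul_dvd_mul_iff_left ha).1
  have hfun : ((f (a • w - b • z) : R) : V) = a * f w - b * f z := by
    simp [LinearPMap.map_sub, LinearPMap.map_smul]
  have harg : ((a • w - b • z : f.domain) : V) = a * (b * x + w) - b * (a * x + z) := by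
    simp [Subring.smul_def]
    ring
  have hsplit : (a : V) * (b * y + f w) = b * (a * y + f z) + f (a • w - b • z) := by
    rw [hfun]
    ring
  rw [hsplit]
  refine dvd_add (h.trans (mul_dvd_mul_left _ hy)) ((?_ : _ ∣ _).trans (hf (a • w - b • z)))
  rw [harg]
  exact dvd_sub dvd_rfl h

theorem pow_dvd_sub_of_mem_ball [IsDomain V] {π : V} {a : R} (ha : (a : V) ≠ 0)
    {z : f.domain} {n : ℕ} (h : π ^ n * a ∣ a * x + z) {y y' : R} (hy : y ∈ ball f x a z)
    (hy' : y' ∈ ball f x a z) : π ^ n ∣ (y : V) - y' := by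
  rw [← mul_dvd_mul_iff_right ha]
  exact h.trans (by convert dvd_sub hy hy' using 1; ring)

variable [IsDomain V] [IsDiscreteValuationRing V]

theorem nonempty_ball (hpure : ∀ r s : R, (r : V) ∣ s → r ∣ s) (hf : IsContractive f)
    (a : R) (z : f.domain) : (ball f x a z).Nonempty := by
  by_cases ha : (a : V) ∣ f z
  · obtain ⟨t, ht⟩ := hpure a (f z) ha
    exact ⟨-t, by simp [mem_ball, ht]⟩
  refine ⟨0, ?_⟩
  rw [mem_ball, ZeroMemClass.coe_zero, mul_zero, zero_add]
  rcases ValuationRing.dvd_total (a * x + z : V) a with h | h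
  · have hz : (a * x + z : V) ∣ z := by simpa using dvd_sub dvd_rfl (h.mul_right x)
    exact hz.trans (hf z)
  · have hz : (a : V) ∣ z := by simpa using dvd_sub h (dvd_mul_right (a : V) x)
    exact absurd (hz.trans (hf z)) ha

theorem exists_pow_mul_dvd {π : V} (hπ : Irreducible π)
    (hdom : ∀ a : R, (a : V) ≠ 0 → ∀ z : f.domain, ∃ (b : R) (w : f.domain),
      ¬(a : V) * (b * x + w) ∣ b * (a * x + z)) (n : ℕ) :
    ∃ a : R, (a : V) ≠ 0 ∧ ∃ z : f.domain, π ^ n * a ∣ a * x + z := by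
  induction n with
  | zero => exact ⟨1, one_ne_zero, 0, by simp⟩
  | succ n ih =>
    obtain ⟨a, ha, z, h⟩ := ih
    obtain ⟨b, w, hbw⟩ := hdom a ha z
    have hb : (b : V) ≠ 0 := fun hb => hbw (by simp [hb])
    refine ⟨b, hb, w, (mul_dvd_mul_iff_left ha).1 ?_⟩
    calc (a : V) * (π ^ (n + 1) * b) = π * b * (π ^ n * a) := by ring
      _ ∣ π * b * (a * x + z) := mul_dvd_mul_left _ h
      _ = π * (b * (a * x + z)) := mul_assoc _ _ _
      _ ∣ a * (b * x + w) := mul_dvd_of_not_dvd hπ hbw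

section Complete

variable [IsAdicComplete (IsLocalRing.maximalIdeal V) V]
  (hpure : ∀ r s : R, (r : V) ∣ s → r ∣ s)
  (hclosed : ∀ v : V, (∀ c : V, c ≠ 0 → ∃ r : R, c ∣ v - r) → v ∈ R)
include hpure hclosed

theorem exists_forall_mem_ball_of_forall_not_dvd (hf : IsContractive f)
    (hdom : ∀ a : R, (a : V) ≠ 0 → ∀ z : f.domain, ∃ (b : R) (w : f.domain),
      ¬(a : V) * (b * x + w) ∣ b * (a * x + z)) :
    ∃ y : R, ∀ a z, y ∈ ball f x a z := by
  obtain ⟨π, hπ⟩ := exists_irreducible V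
  choose a ha z hz using exists_pow_mul_dvd hπ hdom
  choose y hy using fun n => nonempty_ball hpure hf (a n) (z n)
  have hcauchy (m n : ℕ) (hmn : m ≤ n) : π ^ m ∣ (y n : V) - y m := by
    rcases ValuationRing.dvd_total ((a n : V) * (a m * x + z m)) (a m * (a n * x + z n))
      with h | h
    · exact pow_dvd_sub_of_mem_ball (ha m) (hz m) (ball_subset_ball hf (ha n) h (hy n)) (hy m)
    · exact (pow_dvd_pow π hmn).trans
        (pow_dvd_sub_of_mem_ball (ha n) (hz n) (hy n) (ball_subset_ball hf (ha m) h (hy m)))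
  obtain ⟨L, hL⟩ := exists_pow_dvd_sub_of_pow_dvd_sub hπ hcauchy
  have hLR : L ∈ R := hclosed L fun c hc => by
    obtain ⟨k, hk⟩ := exists_dvd_pow_of_ne_zero hπ hc
    exact ⟨y k, hk.trans (hL k)⟩
  refine ⟨⟨L, hLR⟩, fun b w => ?_⟩
  rcases eq_or_ne (b : V) 0 with hb | hb
  · simpa [mem_ball, hb] using hf w
  have hne : (b : V) * x + w ≠ 0 := fun h0 => by
    obtain ⟨b', w', h'⟩ := hdom b hb w
    simp [h0] at h'
  obtain ⟨k, hk⟩ := exists_dvd_pow_of_ne_zero hπ hne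
  have hdomk : (a k : V) * (b * x + w) ∣ b * (a k * x + z k) :=
    calc (a k : V) * (b * x + w) ∣ a k * π ^ k := mul_dvd_mul_left _ hk
      _ ∣ b * (π ^ k * a k) := ⟨b, by ring⟩
      _ ∣ b * (a k * x + z k) := mul_dvd_mul_left _ (hz k)
  have hyk := ball_subset_ball hf (ha k) hdomk (hy k)
  rw [mem_ball] at hyk ⊢
  have hsplit : (b * L + f w : V) = b * (L - y k) + (b * y k + f w) := by ring
  rw [hsplit]
  exact dvd_add (dvd_mul_of_dvd_right (hk.trans (hL k)) _) hyk

theorem exists_forall_mem_ball (hf : IsContractive f) : ∃ y : R, ∀ a z, y ∈ ball f x a z := by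
  by_cases hdom : ∃ a : R, (a : V) ≠ 0 ∧ ∃ z : f.domain,
      ∀ (b : R) (w : f.domain), (a : V) * (b * x + w) ∣ b * (a * x + z)
  · obtain ⟨a, ha, z, h⟩ := hdom
    obtain ⟨y, hy⟩ := nonempty_ball hpure hf a z (x := x)
    exact ⟨y, fun b w => ball_subset_ball hf ha (h b w) hy⟩
  · push Not at hdom
    exact exists_forall_mem_ball_of_forall_not_dvd hpure hclosed hf hdom

theorem IsContractive.exists_le_domain_eq_top (hf : IsContractive f) :
    ∃ g : V →ₗ.[R] R, f ≤ g ∧ g.domain = ⊤ := by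
  obtain ⟨m, hfm, hm⟩ := zorn_le_nonempty₀ {g : V →ₗ.[R] R | IsContractive g}
    (fun c hcs hc g hg => ⟨LinearPMap.sSup c hc.directedOn,
      IsContractive.sSup hc.directedOn ⟨g, hg⟩ hcs, fun _ => LinearPMap.le_sSup _⟩) f hf
  refine ⟨m, hfm, eq_top_iff.2 fun x _ => ?_⟩
  obtain ⟨y, hy⟩ := exists_forall_mem_ball hpure hclosed hm.prop (x := x)
  obtain ⟨g, hmg, hxg, hg⟩ := exists_extension_of_forall_mem_ball hy
  exact (hm.2 hg hmg).1 hxg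

theorem exists_linearMap_retraction : ∃ ψ : V →ₗ[R] R, ψ 1 = 1 := by
  let f : V →ₗ.[R] R := LinearPMap.mkSpanSingleton' (1 : V) (1 : R) fun c hc => by
    ext
    simpa [Subring.smul_def] using hc
  have hf : IsContractive f := by
    rintro ⟨u, hu⟩
    obtain ⟨c, rfl⟩ := Submodule.mem_span_singleton.1 hu
    rw [LinearPMap.mkSpanSingleton'_apply]
    simp [Subring.smul_def]
  obtain ⟨g, hfg, htop⟩ := hf.exists_le_domain_eq_top hpure hclosed
  refine ⟨g.toFun ∘ₗ (LinearEquiv.ofTop _ htop).symm, ?_⟩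
  rw [LinearMap.comp_apply, LinearEquiv.coe_coe, LinearEquiv.ofTop_symm_apply]
  exact (hfg.2 (x := ⟨1, Submodule.mem_span_singleton_self 1⟩) rfl).symm.trans
    (LinearPMap.mkSpanSingleton'_apply_self _ _ _ _)

end Complete

end PartialRetraction

section Frobenius

variable {V : Type*} [CommRing V] [IsDomain V] [IsDiscreteValuationRing V]
  (p : ℕ) [Fact p.Prime] [CharP V p]

theorem frobenius_range_coe_dvd_iff (r s : (frobenius V p).range) : (r : V) ∣ s ↔ r ∣ s := by
  refine ⟨?_, map_dvd (frobenius V p).range.subtype⟩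
  obtain ⟨_, a, rfl⟩ := r
  obtain ⟨_, b, rfl⟩ := s
  intro h
  simp only [frobenius_def] at h
  obtain ⟨c, rfl⟩ := (IsIntegrallyClosed.pow_dvd_pow_iff (Fact.out : p.Prime).ne_zero).1 h
  exact ⟨⟨frobenius V p c, c, rfl⟩, Subtype.ext (map_mul (frobenius V p) a c)⟩

theorem mem_frobenius_range_of_forall_dvd_sub [IsAdicComplete (IsLocalRing.maximalIdeal V) V]
    (v : V) (h : ∀ c : V, c ≠ 0 → ∃ r : (frobenius V p).range, c ∣ v - r) :
    v ∈ (frobenius V p).range := by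
  obtain ⟨π, hπ⟩ := exists_irreducible V
  have hp := (Fact.out : p.Prime).ne_zero
  have happrox (k : ℕ) : ∃ d : V, π ^ (p * k) ∣ v - d ^ p := by
    obtain ⟨⟨_, d, rfl⟩, hd⟩ := h (π ^ (p * k)) (pow_ne_zero _ hπ.ne_zero)
    exact ⟨d, by simpa [frobenius_def] using hd⟩
  choose d hd using happrox
  have hcauchy (m n : ℕ) (hmn : m ≤ n) : π ^ m ∣ d n - d m := by
    rw [← IsIntegrallyClosed.pow_dvd_pow_iff hp, ← pow_mul, sub_pow_char, mul_comm]
    have := dvd_sub ((pow_dvd_pow π (Nat.mul_le_mul_left p hmn)).trans (hd n)) (hd m)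
    convert dvd_neg.2 this using 1
    ring
  obtain ⟨D, hD⟩ := exists_pow_dvd_sub_of_pow_dvd_sub hπ hcauchy
  refine ⟨D, (sub_eq_zero.1 (eq_zero_of_forall_pow_dvd hπ fun k => ?_)).symm⟩
  have hDk : π ^ (p * k) ∣ D ^ p - d k ^ p := by
    rw [← sub_pow_char, mul_comm, pow_mul]
    exact pow_dvd_pow_of_dvd (hD k) p
  refine (pow_dvd_pow π (Nat.le_mul_of_pos_left k (Nat.pos_of_ne_zero hp))).trans ?_
  convert dvd_sub (hd k) hDk using 1
  rw [frobenius_def]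
  ring

end Frobenius

end IsDiscreteValuationRing

theorem complete_dvr_frobenius_split
    (V : Type u) [CommRing V] [IsDomain V] [IsDiscreteValuationRing V]
    (p : ℕ) [Fact p.Prime] [CharP V p]
    [IsAdicComplete (IsLocalRing.maximalIdeal V) V] :
    ∃ φ : V →+ V, (∀ a b : V, φ (a ^ p * b) = a * φ b) ∧ φ 1 = 1 := by
  obtain ⟨ψ, hψ⟩ := IsDiscreteValuationRing.exists_linearMap_retraction
    (R := (frobenius V p).range)
    (fun r s => (IsDiscreteValuationRing.frobenius_range_coe_dvd_iff p r s).1)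
    (IsDiscreteValuationRing.mem_frobenius_range_of_forall_dvd_sub p)
  let e : V ≃+* (frobenius V p).range := RingEquiv.ofBijective (frobenius V p).rangeRestrict
    ⟨fun a b h => frobenius_inj V p (congrArg Subtype.val h), RingHom.rangeRestrict_surjective _⟩
  refine ⟨e.symm.toAddMonoidHom.comp ψ.toAddMonoidHom, fun a b => ?_, by simp [hψ]⟩
  have hab : a ^ p * b = e a • b := by
    rw [Subring.smul_def, smul_eq_mul]
    rfl
  simp [hab]
end

section
/- Let V be a valuation ring of characteristic p > 0 with fraction field K not perfect, value group Γ with Γ = pΓ, and perfect residue field κ. Then V is not Frobenius split. -/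
/-!
Pick `u ∈ V` that is not a `p`-th power (one exists since `K` is the fraction field of `V`) and
look at the values `v (u - l ^ p)` for `l ∈ V`. Because `Γ` is `p`-divisible,
`u - l ^ p = c ^ p * s` with `v c ^ p = v (u - l ^ p)` and `s ∈ V`; because `κ` is perfect,
`s ≡ y ^ p` modulo the maximal ideal, so `l + c * y` strictly improves on `l`: these values have
no minimum. A Frobenius splitting `φ` would provide one, since `φ (l ^ p + c ^ p * s) = l + c * φ s`
shows that `φ u` is at least as good as every `l`.
-/

universe u

theorem IsLocalRing.exists_sub_pow_mem_maximalIdeal {R : Type*} [CommRing R] [IsLocalRing R]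
    {p : ℕ} (hres : ∀ x : ResidueField R, ∃ y : ResidueField R, y ^ p = x) (s : R) :
    ∃ y : R, s - y ^ p ∈ maximalIdeal R := by
  obtain ⟨y', hy'⟩ := hres (residue R s)
  obtain ⟨y, rfl⟩ := residue_surjective y'
  refine ⟨y, (residue_eq_zero_iff _).mp ?_⟩
  rw [map_sub, map_pow, hy', sub_self]

namespace Valuation

variable {K : Type*} [Field K] {Γ₀ : Type*} [LinearOrderedCommGroupWithZero Γ₀]
  (v : Valuation K Γ₀) {p : ℕ}

theorem exists_integer_forall_pow_ne [ExpChar K p] (hK : ¬ Function.Surjective (frobenius K p)) :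
    ∃ u : v.integer, ∀ l : v.integer, l ^ p ≠ u := by
  obtain ⟨u, hu_range⟩ := not_forall.mp hK
  have hu : ∀ l : K, l ^ p ≠ u := fun l hl => hu_range ⟨l, hl⟩
  rcases le_total (v u) 1 with h | h
  · exact ⟨⟨u, h⟩, fun l hl => hu l (congrArg Subtype.val hl)⟩
  · refine ⟨⟨u⁻¹, (map_inv₀ v u).trans_le (inv_le_one_of_one_le₀ h)⟩, fun l hl => hu l⁻¹ ?_⟩
    rw [inv_pow, ← Subring.coe_pow, hl]
    exact inv_inv u

theorem exists_pow_eq_of_surjective (hp : p ≠ 0) (hsurj : Function.Surjective v)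
    (hdiv : ∀ γ : Γ₀ˣ, ∃ δ : Γ₀ˣ, δ ^ p = γ) (x : K) : ∃ c : K, v c ^ p = v x := by
  by_cases hx : x = 0
  · exact ⟨0, by simp [hx, hp]⟩
  obtain ⟨δ, hδ⟩ := hdiv (Units.mk0 (v x) ((map_ne_zero v).mpr hx))
  obtain ⟨c, hc⟩ := hsurj δ
  exact ⟨c, by rw [hc, ← Units.val_pow_eq_pow_val, hδ, Units.val_mk0]⟩

theorem exists_eq_pow_mul_of_surjective (hp : p ≠ 0) (hsurj : Function.Surjective v)
    (hdiv : ∀ γ : Γ₀ˣ, ∃ δ : Γ₀ˣ, δ ^ p = γ) (x : v.integer) :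
    ∃ c s : v.integer, x = c ^ p * s ∧ v (c : K) ^ p = v (x : K) := by
  obtain ⟨c, hc⟩ := exists_pow_eq_of_surjective v hp hsurj hdiv x
  have hc1 : v c ≤ 1 := (pow_le_one_iff hp).mp (hc ▸ x.2)
  by_cases hx : (x : K) = 0
  · exact ⟨⟨c, hc1⟩, 0, Subtype.ext (by simp [hx]), hc⟩
  have hcp : v c ^ p ≠ 0 := hc ▸ (map_ne_zero v).mpr hx
  have hs : v ((x : K) / c ^ p) = 1 := by rw [map_div₀, map_pow, hc, div_self (hc ▸ hcp)]
  refine ⟨⟨c, hc1⟩, ⟨(x : K) / c ^ p, hs.le⟩, Subtype.ext ?_, hc⟩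
  have : (c : K) ^ p ≠ 0 := by rw [← map_ne_zero v, map_pow]; exact hcp
  simp [mul_div_cancel₀ _ this]

variable [CharP K p] [Fact p.Prime]

theorem exists_valuation_sub_pow_lt (hsurj : Function.Surjective v)
    (hdiv : ∀ γ : Γ₀ˣ, ∃ δ : Γ₀ˣ, δ ^ p = γ)
    (hres : ∀ x : IsLocalRing.ResidueField v.integer,
      ∃ y : IsLocalRing.ResidueField v.integer, y ^ p = x)
    {u l : v.integer} (hul : u ≠ l ^ p) :
    ∃ l' : v.integer, v ↑(u - l' ^ p) < v ↑(u - l ^ p) := by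
  have hp := (Fact.out : p.Prime).ne_zero
  obtain ⟨c, s, hcs, hc⟩ := exists_eq_pow_mul_of_surjective v hp hsurj hdiv (u - l ^ p)
  obtain ⟨y, hy⟩ := IsLocalRing.exists_sub_pow_mem_maximalIdeal hres s
  have hy : v ↑(s - y ^ p) < 1 := Integer.not_isUnit_iff_valuation_lt_one.mp hy
  have hc0 : 0 < v (c : K) ^ p :=
    zero_lt_iff.mpr (hc ▸ (map_ne_zero v).mpr (by exact_mod_cast sub_ne_zero.mpr hul))
  have hkey : u - (l + c * y) ^ p = c ^ p * (s - y ^ p) := by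
    rw [add_pow_char, mul_pow, mul_sub, ← hcs]
    ring
  refine ⟨l + c * y, ?_⟩
  calc v ↑(u - (l + c * y) ^ p) = v (c : K) ^ p * v ↑(s - y ^ p) := by
        rw [hkey, Subring.coe_mul, map_mul, Subring.coe_pow, map_pow]
    _ < v (c : K) ^ p := mul_lt_of_lt_one_right hc0 hy
    _ = v ↑(u - l ^ p) := hc

theorem valuation_sub_pow_splitting_le (hsurj : Function.Surjective v)
    (hdiv : ∀ γ : Γ₀ˣ, ∃ δ : Γ₀ˣ, δ ^ p = γ) {φ : v.integer →+ v.integer}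
    (hφ : ∀ a b : v.integer, φ (a ^ p * b) = a * φ b) (hφ1 : φ 1 = 1) (u l : v.integer) :
    v ↑(u - φ u ^ p) ≤ v ↑(u - l ^ p) := by
  obtain ⟨c, s, hcs, hc⟩ :=
    exists_eq_pow_mul_of_surjective v (Fact.out : p.Prime).ne_zero hsurj hdiv (u - l ^ p)
  have hu : u = l ^ p * 1 + c ^ p * s := by rw [mul_one, ← hcs, add_sub_cancel]
  have hφu : φ u = l + c * φ s := by rw [hu, map_add, hφ, hφ, hφ1, mul_one]
  have hkey : u - φ u ^ p = c ^ p * (s - φ s ^ p) := by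
    rw [hφu, add_pow_char, mul_pow, mul_sub]
    nth_rewrite 1 [hu]
    ring
  calc v ↑(u - φ u ^ p) = v (c : K) ^ p * v ↑(s - φ s ^ p) := by
        rw [hkey, Subring.coe_mul, map_mul, Subring.coe_pow, map_pow]
    _ ≤ v (c : K) ^ p := mul_le_of_le_one_right' (s - φ s ^ p).2
    _ = v ↑(u - l ^ p) := hc

end Valuation

theorem not_frobenius_split_of_totally_unramified
    (K : Type u) [Field K] (p : ℕ) [Fact p.Prime] [CharP K p]
    (Γ₀ : Type u) [LinearOrderedCommGroupWithZero Γ₀]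
    (v : Valuation K Γ₀) (hsurj : Function.Surjective v)
    (hKnotperfect : ¬ Function.Surjective (frobenius K p))
    (hdiv : ∀ γ : Γ₀ˣ, ∃ δ : Γ₀ˣ, δ ^ p = γ)
    (hresperfect :
      ∀ x : IsLocalRing.ResidueField v.integer,
        ∃ y : IsLocalRing.ResidueField v.integer, y ^ p = x) :
    ¬ ∃ φ : v.integer →+ v.integer,
        (∀ a b : v.integer, φ (a ^ p * b) = a * φ b) ∧ φ 1 = 1 := by
  rintro ⟨φ, hφ, hφ1⟩
  obtain ⟨u, hu⟩ := v.exists_integer_forall_pow_ne hKnotperfect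
  obtain ⟨l, hl⟩ := v.exists_valuation_sub_pow_lt hsurj hdiv hresperfect (hu (φ u)).symm
  exact (v.valuation_sub_pow_splitting_le hsurj hdiv hφ hφ1 u l).not_gt hl
end

section
/- Let V be a valuation ring of a field K of characteristic p > 0 with principal maximal ideal generated by an element of value γ, residue field κ, and value group Γ. If [Γ:pΓ] = p and [Γ:pΓ]·[κ:κ^p] = [K:K^p] < ∞, then V is F-finite. -/
/-!
Let `t` generate the maximal ideal, so that `v t` is the largest value below `1`, and lift a
`κ^p`-basis of `κ` to units `u_j` of `V`. For `i < p`, the value of a `K^p`-combination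
`∑ c_{ij}^p t^i u_j` is the largest value of its terms: in a row `i`, after dividing by the
coefficient of largest value, the residue of `∑_j c_{ij}^p u_j` is a nonzero `κ^p`-combination of
the basis; and the rows have values in the distinct cosets `v(t)^i Γ^p`, since `v t` generates
`Γ/Γ^p`, which has order `p`. So the `p·[κ:κ^p] = [K:K^p]` elements `t^i u_j` form a
`K^p`-basis of `K`, and an element of `V` has coefficients `c_{ij} ∈ V` in it, because
`v(c)^p v(t)^i ≤ 1` with `i < p` forces `v c ≤ 1`. Hence the `t^i u_j` generate `V` over `V^p`.
-/

universe u

open IsLocalRing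

theorem residue_charP (V : Type u) [CommRing V] [IsLocalRing V]
    (p : ℕ) [Fact p.Prime] [CharP V p] :
    CharP (ResidueField V) p := by
  refine CharP.quotient' p _ (fun x hx => ?_)
  by_contra hx0
  have hdvd : ¬ (p ∣ x) := fun h => hx0 ((CharP.cast_eq_zero_iff V p x).mpr h)
  have hcop : IsCoprime (p : ℤ) (x : ℤ) := by
    rw [Int.isCoprime_iff_gcd_eq_one]
    simpa using (Nat.Prime.coprime_iff_not_dvd Fact.out).mpr hdvd
  obtain ⟨a, b, hab⟩ := hcop
  have h1 : ((a * p + b * x : ℤ) : V) = 1 := by exact_mod_cast congrArg (fun n : ℤ => (n : V)) hab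
  have hunit : IsUnit ((x : ℤ) : V) := by
    refine IsUnit.of_mul_eq_one ((b : ℤ) : V) ?_
    push_cast at h1 ⊢
    rw [CharP.cast_eq_zero V p] at h1
    ring_nf at h1 ⊢
    linear_combination h1
  rw [Int.cast_natCast] at hunit
  exact (IsLocalRing.mem_maximalIdeal _).mp hx hunit

theorem eq_of_pow_mul_pow_eq_pow_mul_pow {G : Type*} [CommGroup G] {p : ℕ} (hp : p.Prime)
    (hindex : (powMonoidHom p : G →* G).range.index = p) {γ : G}
    (hγ : γ ∉ (powMonoidHom p : G →* G).range) {a b : G} {i j : ℕ} (hi : i < p) (hj : j < p)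
    (h : a ^ p * γ ^ i = b ^ p * γ ^ j) : i = j := by
  set H := (powMonoidHom p : G →* G).range
  have hpow (c : G) : ((c ^ p : G) : G ⧸ H) = 1 := (QuotientGroup.eq_one_iff _).mpr ⟨c, rfl⟩
  have horder : orderOf (γ : G ⧸ H) = p := by
    have := Fact.mk hp
    refine orderOf_eq_prime ?_ ?_
    · rw [← hindex]; exact pow_card_eq_one'
    · rwa [Ne, QuotientGroup.eq_one_iff]
  have hcoset := congrArg (QuotientGroup.mk : G → G ⧸ H) h
  rw [QuotientGroup.mk_mul, QuotientGroup.mk_mul, hpow, hpow, one_mul, one_mul,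
    QuotientGroup.mk_pow, QuotientGroup.mk_pow] at hcoset
  exact pow_injOn_Iio_orderOf (by rwa [horder]) (by rwa [horder]) hcoset

section ValueGroup

variable {Γ₀ : Type*} [LinearOrderedCommGroupWithZero Γ₀] {γ : Γ₀} {p : ℕ}

theorem ne_zero_of_isGreatest_Iio_one [Nontrivial Γ₀ˣ] (hγ : IsGreatest (Set.Iio 1) γ) :
    γ ≠ 0 := by
  rintro rfl
  obtain ⟨g, hg⟩ := exists_ne (1 : Γ₀ˣ)
  obtain ⟨g, hg1⟩ : ∃ g : Γ₀ˣ, g < 1 :=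
    (lt_or_gt_of_ne hg).elim (fun h => ⟨g, h⟩) (fun h => ⟨g⁻¹, inv_lt_one'.mpr h⟩)
  exact g.ne_zero (le_zero_iff.mp (hγ.2 (by exact_mod_cast hg1)))

theorem pow_ne_of_isGreatest_Iio_one (hγ : IsGreatest (Set.Iio 1) γ) (hγ0 : γ ≠ 0)
    (hp : 1 < p) (δ : Γ₀) : δ ^ p ≠ γ := by
  rintro rfl
  have hδ : δ < 1 := by
    by_contra! h
    exact (one_le_pow₀ h).not_gt hγ.1
  have hδ0 : 0 < δ := zero_lt_iff.mpr (by rintro rfl; exact hγ0 (zero_pow (by omega)))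
  exact (pow_lt_self_of_lt_one₀ hδ0 hδ hp).not_ge (hγ.2 hδ)

theorem le_one_of_pow_mul_pow_le_one (hγ : IsGreatest (Set.Iio 1) γ) (hγ0 : γ ≠ 0)
    {β : Γ₀} {i : ℕ} (hi : i < p) (h : β ^ p * γ ^ i ≤ 1) : β ≤ 1 := by
  by_contra! hβ
  have hβ0 : 0 < β ^ p := pow_pos (zero_lt_one.trans hβ) p
  have hinv : β⁻¹ ≤ γ := hγ.2 (inv_lt_one_of_one_lt₀ hβ)
  have : γ ^ i < γ ^ i := calc
    γ ^ i ≤ (β ^ p)⁻¹ * 1 := (le_inv_mul_iff₀ hβ0).mpr h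
    _ = β⁻¹ ^ p := by rw [mul_one, inv_pow]
    _ ≤ γ ^ p := pow_le_pow_left₀ zero_le hinv p
    _ < γ ^ i := pow_lt_pow_right_of_lt_one₀ (zero_lt_iff.mpr hγ0) hγ.1 hi
  exact this.false

theorem eq_of_pow_mul_pow_eq_pow_mul_pow₀ (hp : p.Prime)
    (hindex : (powMonoidHom p : Γ₀ˣ →* Γ₀ˣ).range.index = p)
    (hγ : IsGreatest (Set.Iio 1) γ) (hγ0 : γ ≠ 0) {a b : Γ₀} (ha : a ≠ 0) (hb : b ≠ 0)
    {i j : ℕ} (hi : i < p) (hj : j < p) (h : a ^ p * γ ^ i = b ^ p * γ ^ j) : i = j := by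
  refine eq_of_pow_mul_pow_eq_pow_mul_pow hp hindex (γ := Units.mk0 γ hγ0) ?_
    (a := Units.mk0 a ha) (b := Units.mk0 b hb) hi hj (Units.ext (by simpa using h))
  rintro ⟨δ, hδ⟩
  exact pow_ne_of_isGreatest_Iio_one hγ hγ0 hp.one_lt δ (by simpa using congrArg Units.val hδ)

end ValueGroup

theorem mem_pthPowerSubfield {K : Type*} [Field K] {p : ℕ} [Fact p.Prime] [CharP K p] {y : K} :
    y ∈ pthPowerSubfield K p ↔ ∃ x, x ^ p = y := by
  simp [pthPowerSubfield, frobenius_def]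

theorem Valuation.map_le_map_sum_of_distinct {R Γ₀ : Type*} [Ring R]
    [LinearOrderedCommGroupWithZero Γ₀] (v : Valuation R Γ₀) {ι : Type*} [Fintype ι]
    {a : ι → R} (hdist : ∀ i j, v (a i) ≠ 0 → v (a i) = v (a j) → i = j) (i : ι) :
    v (a i) ≤ v (∑ j, a j) := by
  classical
  have : Nonempty ι := ⟨i⟩
  obtain ⟨m, hm⟩ := Finite.exists_max fun j => v (a j)
  rcases eq_or_ne (v (a m)) 0 with h0 | h0
  · exact (hm i).trans (h0 ▸ zero_le)
  · rw [v.map_sum_eq_of_lt (Finset.mem_univ m) fun j hj => (hm j).lt_of_ne fun h =>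
      (Finset.mem_sdiff.mp hj).2 (Finset.mem_singleton.mpr (hdist j m (h ▸ h0) h))]
    exact hm i

attribute [local instance] residue_charP

theorem isUnit_sum_pow_mul_of_linearIndependent {R : Type*} [CommRing R] [IsLocalRing R]
    {p : ℕ} [Fact p.Prime] [CharP R p] {ι : Type*} [Fintype ι] {u : ι → R}
    (hu : LinearIndependent (pthPowerSubfield (ResidueField R) p) (residue R ∘ u))
    {d : ι → R} {j : ι} (hd : IsUnit (d j)) : IsUnit (∑ k, d k ^ p * u k) := by
  rw [← residue_ne_zero_iff_isUnit] at hd ⊢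
  intro h0
  have hcomb : ∑ k, (⟨residue R (d k) ^ p, mem_pthPowerSubfield.mpr ⟨_, rfl⟩⟩ :
      pthPowerSubfield (ResidueField R) p) • residue R (u k) = 0 := by
    simpa [Subfield.smul_def] using h0
  have := congrArg Subtype.val (Fintype.linearIndependent_iff.mp hu _ hcomb j)
  exact hd (pow_eq_zero_iff (Fact.out : p.Prime).ne_zero |>.mp this)

namespace Valuation

variable {K Γ₀ : Type*} [Field K] [LinearOrderedCommGroupWithZero Γ₀] {v : Valuation K Γ₀}

theorem isGreatest_Iio_one_of_maximalIdeal_eq_span (hsurj : Function.Surjective v)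
    {t : v.integer} (ht : maximalIdeal v.integer = Ideal.span {t}) :
    IsGreatest (Set.Iio 1) (v t) := by
  have hmem (x : v.integer) : x ∈ maximalIdeal v.integer ↔ v x < 1 :=
    Integer.not_isUnit_iff_valuation_lt_one
  refine ⟨(hmem t).mp (ht ▸ Ideal.mem_span_singleton_self t), fun g (hg : g < 1) => ?_⟩
  obtain ⟨x, rfl⟩ := hsurj g
  obtain ⟨y, hy⟩ := Ideal.mem_span_singleton.mp (ht ▸ (hmem ⟨x, hg.le⟩).mpr hg)
  calc v x = v t * v y := by rw [← map_mul]; exact congrArg (v ∘ Subtype.val) hy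
    _ ≤ v t := mul_le_of_le_one_right' y.2

theorem map_eq_one_of_residue_ne_zero {x : v.integer} (hx : residue v.integer x ≠ 0) :
    v x = 1 :=
  (Integers.isUnit_iff_valuation_eq_one (integer.integers v)).mp
    ((residue_ne_zero_iff_isUnit x).mp hx)

variable {p : ℕ} [Fact p.Prime] [CharP K p] {ι : Type*} [Fintype ι] {u : ι → v.integer}

theorem map_sum_pow_mul_of_linearIndependent
    (hu : LinearIndependent (pthPowerSubfield (ResidueField v.integer) p) (residue v.integer ∘ u))
    {c : ι → K} {j : ι} (hj : ∀ k, v (c k) ≤ v (c j)) :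
    v (∑ k, c k ^ p * u k) = v (c j) ^ p := by
  have hp0 : p ≠ 0 := (Fact.out : p.Prime).ne_zero
  rcases eq_or_ne (c j) 0 with h0 | h0
  · have hc (k : ι) : c k = 0 := v.zero_iff.mp (le_zero_iff.mp (by simpa [h0] using hj k))
    simp [hc, hp0]
  · let d (k : ι) : v.integer := ⟨c k / c j, (v.mem_integer_iff _).mpr <| by
      rw [map_div₀]; exact div_le_one_of_le₀ (hj k) zero_le⟩
    have hdj : d j = 1 := Subtype.ext (div_self h0)
    have hunit := isUnit_sum_pow_mul_of_linearIndependent hu (hdj ▸ isUnit_one : IsUnit (d j))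
    have hsum :
        ∑ k, c k ^ p * (u k : K) = c j ^ p * ((∑ k, d k ^ p * u k : v.integer) : K) := by
      push_cast [d, Finset.mul_sum]
      refine Finset.sum_congr rfl fun k _ => ?_
      rw [div_pow]
      field_simp
    have hv1 : v ((∑ k, d k ^ p * u k : v.integer) : K) = 1 :=
      (Integers.isUnit_iff_valuation_eq_one (integer.integers v)).mp hunit
    rw [hsum, map_mul, hv1, map_pow, mul_one]

theorem map_pow_mul_le_map_sum
    (hindex : (powMonoidHom p : Γ₀ˣ →* Γ₀ˣ).range.index = p) {t : K}
    (hγ : IsGreatest (Set.Iio 1) (v t)) (ht : v t ≠ 0)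
    (hu : LinearIndependent (pthPowerSubfield (ResidueField v.integer) p) (residue v.integer ∘ u))
    (c : Fin p × ι → K) (ij : Fin p × ι) :
    v (c ij ^ p * (t ^ (ij.1 : ℕ) * u ij.2)) ≤
      v (∑ kl, c kl ^ p * (t ^ (kl.1 : ℕ) * u kl.2)) := by
  have : Nonempty ι := ⟨ij.2⟩
  choose jmax hjmax using fun i : Fin p => Finite.exists_max fun k => v (c (i, k))
  let a (i : Fin p) : K := t ^ (i : ℕ) * ∑ k, c (i, k) ^ p * u k
  have hva (i : Fin p) : v (a i) = v (c (i, jmax i)) ^ p * v t ^ (i : ℕ) := by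
    rw [map_mul, map_pow, map_sum_pow_mul_of_linearIndependent hu (hjmax i), mul_comm]
  have hsum : ∑ kl, c kl ^ p * (t ^ (kl.1 : ℕ) * u kl.2) = ∑ i, a i := by
    simp only [a, Fintype.sum_prod_type, Finset.mul_sum]
    exact Finset.sum_congr rfl fun i _ => Finset.sum_congr rfl fun k _ => by ring
  have hdist (i i' : Fin p) (h0 : v (a i) ≠ 0) (heq : v (a i) = v (a i')) : i = i' := by
    rw [hva] at h0
    rw [hva, hva] at heq
    have h0' := heq ▸ h0
    exact Fin.ext <| eq_of_pow_mul_pow_eq_pow_mul_pow₀ Fact.out hindex hγ ht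
      (pow_ne_zero_iff (Fact.out : p.Prime).ne_zero |>.mp (left_ne_zero_of_mul h0))
      (pow_ne_zero_iff (Fact.out : p.Prime).ne_zero |>.mp (left_ne_zero_of_mul h0'))
      i.isLt i'.isLt heq
  calc v (c ij ^ p * (t ^ (ij.1 : ℕ) * u ij.2))
      ≤ v (a ij.1) := by
        rw [hva, map_mul, map_mul, map_pow, map_pow,
          map_eq_one_of_residue_ne_zero (hu.ne_zero ij.2), mul_one]
        gcongr
        exact hjmax ij.1 ij.2
    _ ≤ v (∑ i, a i) := v.map_le_map_sum_of_distinct hdist ij.1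
    _ = _ := by rw [hsum]

theorem mem_integer_of_sum_pow_mul_mem_integer
    (hindex : (powMonoidHom p : Γ₀ˣ →* Γ₀ˣ).range.index = p) {t : K}
    (hγ : IsGreatest (Set.Iio 1) (v t)) (ht : v t ≠ 0)
    (hu : LinearIndependent (pthPowerSubfield (ResidueField v.integer) p) (residue v.integer ∘ u))
    {c : Fin p × ι → K} (hc : ∑ kl, c kl ^ p * (t ^ (kl.1 : ℕ) * u kl.2) ∈ v.integer)
    (ij : Fin p × ι) : c ij ∈ v.integer := by
  have h := (map_pow_mul_le_map_sum hindex hγ ht hu c ij).trans hc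
  rw [map_mul, map_mul, map_pow, map_pow, map_eq_one_of_residue_ne_zero (hu.ne_zero ij.2),
    mul_one] at h
  exact le_one_of_pow_mul_pow_le_one hγ ht ij.1.isLt h

theorem linearIndependent_pow_mul
    (hindex : (powMonoidHom p : Γ₀ˣ →* Γ₀ˣ).range.index = p) {t : K}
    (hγ : IsGreatest (Set.Iio 1) (v t)) (ht : v t ≠ 0)
    (hu : LinearIndependent (pthPowerSubfield (ResidueField v.integer) p)
      (residue v.integer ∘ u)) :
    LinearIndependent (pthPowerSubfield K p)
      fun ij : Fin p × ι => t ^ (ij.1 : ℕ) * (u ij.2 : K) := by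
  rw [Fintype.linearIndependent_iff]
  intro g hg ij
  choose c hc using fun kl => mem_pthPowerSubfield.mp (g kl).2
  have hsum : ∑ kl, c kl ^ p * (t ^ (kl.1 : ℕ) * u kl.2) = 0 := by
    simpa [hc, Subfield.smul_def] using hg
  have h := map_pow_mul_le_map_sum hindex hγ ht hu c ij
  rw [hsum, map_zero, le_zero_iff, map_mul, map_mul, map_pow, map_pow,
    map_eq_one_of_residue_ne_zero (hu.ne_zero ij.2), mul_one] at h
  have : c ij ^ p = 0 := by simpa [ht] using h
  exact Subtype.ext (by rw [← hc]; exact this)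

theorem integer_finite_frobenius_range (e : ι → v.integer)
    (hspan : Submodule.span (pthPowerSubfield K p) (Set.range fun i => (e i : K)) = ⊤)
    (hint : ∀ c : ι → K, ∑ i, c i ^ p * e i ∈ v.integer → ∀ i, c i ∈ v.integer) :
    Module.Finite (frobenius v.integer p).range v.integer := by
  refine ⟨Submodule.fg_def.mpr ⟨Set.range e, Set.finite_range e, ?_⟩⟩
  refine eq_top_iff.mpr fun x _ => ?_
  have hxK : (x : K) ∈ Submodule.span (pthPowerSubfield K p) (Set.range fun i => (e i : K)) :=
    hspan ▸ Submodule.mem_top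
  obtain ⟨g, hg⟩ := (Submodule.mem_span_range_iff_exists_fun _).mp hxK
  choose c hc using fun i => mem_pthPowerSubfield.mp (g i).2
  have hx : ∑ i, c i ^ p * e i = x := by simpa [hc, Subfield.smul_def] using hg
  have hcint := hint c (hx ▸ x.2)
  refine (Submodule.mem_span_range_iff_exists_fun _).mpr
    ⟨fun i => ⟨⟨c i, hcint i⟩ ^ p, ⟨_, rfl⟩⟩, Subtype.ext ?_⟩
  simpa [Subring.smul_def] using hx

end Valuation

theorem fFinite_of_principal_maximalIdeal_of_defectless
    (K : Type u) [Field K] (p : ℕ) [Fact p.Prime] [CharP K p]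
    (Γ₀ : Type u) [LinearOrderedCommGroupWithZero Γ₀]
    (v : Valuation K Γ₀) (hsurj : Function.Surjective v)
    (hm : (IsLocalRing.maximalIdeal v.integer).IsPrincipal)
    [FiniteDimensional (pthPowerSubfield K p) K]
    (hindex : ((powMonoidHom p : Γ₀ˣ →* Γ₀ˣ)).range.index = p)
    (hdefectless :
      letI : CharP (ResidueField v.integer) p := residue_charP v.integer p
      ((powMonoidHom p : Γ₀ˣ →* Γ₀ˣ)).range.index *
          Module.finrank (pthPowerSubfield (ResidueField v.integer) p)
            (ResidueField v.integer) =
        Module.finrank (pthPowerSubfield K p) K) :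
    Module.Finite (frobenius v.integer p).range v.integer := by
  have : Nontrivial Γ₀ˣ := by
    by_contra h
    rw [not_nontrivial_iff_subsingleton] at h
    rw [Subsingleton.elim (powMonoidHom p : Γ₀ˣ →* Γ₀ˣ).range ⊤, Subgroup.index_top]
      at hindex
    exact (Fact.out : p.Prime).one_lt.ne hindex
  obtain ⟨t, ht⟩ := hm.principal
  have hγ := v.isGreatest_Iio_one_of_maximalIdeal_eq_span hsurj ht
  have ht0 := ne_zero_of_isGreatest_Iio_one hγ
  rw [hindex] at hdefectless
  set κ := ResidueField v.integer
  have : FiniteDimensional (pthPowerSubfield κ p) κ := Module.finite_of_finrank_pos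
    (pos_of_mul_pos_right (hdefectless ▸ Module.finrank_pos) (Nat.zero_le p))
  let b := Module.finBasis (pthPowerSubfield κ p) κ
  choose u hbu using fun j => residue_surjective (b j)
  have hu : LinearIndependent (pthPowerSubfield κ p) (residue v.integer ∘ u) := by
    convert b.linearIndependent
    exact funext hbu
  refine Valuation.integer_finite_frobenius_range (fun ij : Fin p × _ => t ^ (ij.1 : ℕ) * u ij.2)
    ?_ fun c hc => Valuation.mem_integer_of_sum_pow_mul_mem_integer hindex hγ ht0 hu
      (by simpa using hc)
  refine (Valuation.linearIndependent_pow_mul hindex hγ ht0 hu).span_eq_top_of_card_eq_finrank' ?_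
  simpa using hdefectless
end
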